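/- Let n ≥ 1, λ > 0, and let ζ = (ζ', ζ_{n+1}) ∈ ℍ^n × ℍ lie on the unit sphere S^{4n+3} with ζ_{n+1} ≠ −1. Then C(δ_λ(C^{-1}(ζ))) = Γ_{λ,N}(ζ), where Γ_{λ,N}(ζ', ζ_{n+1}) = ((1+ζ_{n+1}+λ²(1−ζ_{n+1}))^{-1}(2λ ζ'), (1+ζ_{n+1}+λ²(1−ζ_{n+1}))^{-1}(1+ζ_{n+1}−λ²(1−ζ_{n+1}))). -/

import Mathlib

/-!
Write `u = 1 + ζ_{n+1}` and `x = u⁻¹(1 - ζ_{n+1})`. Since `|ζ'|² = 1 - |ζ_{n+1}|²` on the sphere and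
`Re(ū(1 - ζ_{n+1})) = 1 - |ζ_{n+1}|²`, the point `(q, ω) = C⁻¹(ζ)` satisfies `|q|² + ω = x`.
After dilation the denominator of the Cayley transform is therefore `1 + λ²x = u⁻¹ D`, with `D`
the denominator of `Γ_{λ,N}`, and the factor `u` it contributes cancels the `u⁻¹` in `λq`.
-/

open Quaternion Finset

namespace Quaternion

theorem re_star_one_add_mul_one_sub (z : ℍ[ℝ]) :
    (star (1 + z) * (1 - z)).re = 1 - normSq z := by
  have h : star (1 + z) * (1 - z) = 1 - z + star z - star z * z := by
    rw [star_add, star_one]; noncomm_ring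
  rw [h, star_mul_self]
  simp

theorem re_inv_one_add_mul_one_sub (z : ℍ[ℝ]) :
    ((1 + z)⁻¹ * (1 - z)).re = (1 - normSq z) / normSq (1 + z) := by
  rw [inv_def, smul_mul_assoc, re_smul, re_star_one_add_mul_one_sub, smul_eq_mul, inv_mul_eq_div]

theorem sum_norm_sq_mul {ι : Type*} [Fintype ι] (a : ℍ[ℝ]) (v : ι → ℍ[ℝ]) :
    ∑ i, ‖a * v i‖ ^ 2 = ‖a‖ ^ 2 * ∑ i, ‖v i‖ ^ 2 := by
  simp only [norm_mul, mul_pow, mul_sum]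

theorem coe_sum_norm_sq_inv_mul_add_im {ι : Type*} [Fintype ι] (v : ι → ℍ[ℝ]) (z : ℍ[ℝ])
    (h : ∑ i, ‖v i‖ ^ 2 + ‖z‖ ^ 2 = 1) :
    ((∑ i, ‖(1 + z)⁻¹ * v i‖ ^ 2 : ℝ) : ℍ[ℝ]) + ((1 + z)⁻¹ * (1 - z)).im = (1 + z)⁻¹ * (1 - z) := by
  have hsum : ∑ i, ‖(1 + z)⁻¹ * v i‖ ^ 2 = ((1 + z)⁻¹ * (1 - z)).re := by
    have hsq (a : ℍ[ℝ]) : ‖a‖ ^ 2 = normSq a := by rw [sq, normSq_eq_norm_mul_self]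
    rw [sum_norm_sq_mul, re_inv_one_add_mul_one_sub, norm_inv, inv_pow, hsq (1 + z),
      eq_sub_of_add_eq h, hsq z, inv_mul_eq_div]
  rw [hsum, re_add_im]

theorem inv_mul_add_coe_mul {u : ℍ[ℝ]} (hu : u ≠ 0) (r : ℝ) (w : ℍ[ℝ]) :
    u⁻¹ * (u + r * w) = 1 + r * (u⁻¹ * w) := by
  rw [mul_add, inv_mul_cancel₀ hu, ← mul_assoc, ← coe_commutes, mul_assoc]

theorem inv_mul_sub_coe_mul {u : ℍ[ℝ]} (hu : u ≠ 0) (r : ℝ) (w : ℍ[ℝ]) :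
    u⁻¹ * (u - r * w) = 1 - r * (u⁻¹ * w) := by
  rw [mul_sub, inv_mul_cancel₀ hu, ← mul_assoc, ← coe_commutes, mul_assoc]

end Quaternion

theorem stmt11_general (n : ℕ) (lam : ℝ)
    (ζ' : Fin n → Quaternion ℝ) (ζlast : Quaternion ℝ)
    (hsphere : (∑ ℓ, ‖ζ' ℓ‖ ^ 2) + ‖ζlast‖ ^ 2 = 1) (hpole : ζlast ≠ -1)
    (q : Fin n → Quaternion ℝ) (hq : ∀ ℓ, q ℓ = (1 + ζlast)⁻¹ * ζ' ℓ)
    (ω : Quaternion ℝ) (hω : ω = ((1 + ζlast)⁻¹ * (1 - ζlast)).im)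
    (qdil : Fin n → Quaternion ℝ) (hqdil : ∀ ℓ, qdil ℓ = ((lam : ℝ) : Quaternion ℝ) * q ℓ)
    (ωdil : Quaternion ℝ) (hωdil : ωdil = ((lam ^ 2 : ℝ) : Quaternion ℝ) * ω)
    (B : Quaternion ℝ)
    (hB : B = (((1 + ∑ ℓ, ‖qdil ℓ‖ ^ 2 : ℝ)) : Quaternion ℝ) + ωdil)
    (D : Quaternion ℝ)
    (hD : D = 1 + ζlast + ((lam ^ 2 : ℝ) : Quaternion ℝ) * (1 - ζlast)) :
    (∀ ℓ, B⁻¹ * (2 * qdil ℓ) = D⁻¹ * (((2 * lam : ℝ) : Quaternion ℝ) * ζ' ℓ)) ∧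
    B⁻¹ * ((((1 - ∑ ℓ, ‖qdil ℓ‖ ^ 2 : ℝ)) : Quaternion ℝ) - ωdil) =
      D⁻¹ * (1 + ζlast - ((lam ^ 2 : ℝ) : Quaternion ℝ) * (1 - ζlast)) := by
  set u : Quaternion ℝ := 1 + ζlast
  have hu : u ≠ 0 := fun h => hpole (eq_neg_of_add_eq_zero_right h)
  have hx : ((∑ ℓ, ‖q ℓ‖ ^ 2 : ℝ) : Quaternion ℝ) + ω = u⁻¹ * (1 - ζlast) := by
    simp only [hq, hω]
    exact coe_sum_norm_sq_inv_mul_add_im ζ' ζlast hsphere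
  have hdil : ∑ ℓ, ‖qdil ℓ‖ ^ 2 = lam ^ 2 * ∑ ℓ, ‖q ℓ‖ ^ 2 := by
    simp only [hqdil, sum_norm_sq_mul, norm_coe, Real.norm_eq_abs, sq_abs]
  have hBD : B = u⁻¹ * D := by
    rw [hB, hD, inv_mul_add_coe_mul hu, ← hx, hdil, hωdil]
    push_cast
    noncomm_ring
  have hBinv : B⁻¹ = D⁻¹ * u := by rw [hBD, mul_inv_rev, inv_inv]
  have hnum : (((1 - ∑ ℓ, ‖qdil ℓ‖ ^ 2 : ℝ)) : Quaternion ℝ) - ωdil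
      = u⁻¹ * (u - ((lam ^ 2 : ℝ) : Quaternion ℝ) * (1 - ζlast)) := by
    rw [inv_mul_sub_coe_mul hu, ← hx, hdil, hωdil]
    push_cast
    noncomm_ring
  refine ⟨fun ℓ => ?_, ?_⟩
  · have htwo : (2 : Quaternion ℝ) * lam = ((2 * lam : ℝ) : Quaternion ℝ) := by push_cast; rfl
    rw [hBinv, hqdil, hq, mul_assoc, ← mul_assoc 2, htwo, ← mul_assoc u, ← coe_commutes,
      mul_assoc, mul_inv_cancel_left₀ hu]
  · rw [hBinv, hnum, mul_assoc, mul_inv_cancel_left₀ hu]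

/-- Conjugating the Heisenberg dilation `δ_λ` by the quaternionic Cayley transform gives the
conformal map `Γ_{λ,N}`: for `ζ = (ζ', ζ_{n+1}) ∈ S^{4n+3}` with `ζ_{n+1} ≠ −1` and `λ > 0`,
`C(δ_λ(C⁻¹(ζ))) = Γ_{λ,N}(ζ)`, where
`Γ_{λ,N}(ζ', ζ_{n+1}) = ((1+ζ_{n+1}+λ²(1−ζ_{n+1}))⁻¹(2λζ'),
(1+ζ_{n+1}+λ²(1−ζ_{n+1}))⁻¹(1+ζ_{n+1}−λ²(1−ζ_{n+1})))`. -/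
theorem stmt11 (n : ℕ) (hn : 1 ≤ n) (lam : ℝ) (hlam : 0 < lam)
    (ζ' : Fin n → Quaternion ℝ) (ζlast : Quaternion ℝ)
    (hsphere : (∑ ℓ, ‖ζ' ℓ‖ ^ 2) + ‖ζlast‖ ^ 2 = 1) (hpole : ζlast ≠ -1)
    (q : Fin n → Quaternion ℝ) (hq : ∀ ℓ, q ℓ = (1 + ζlast)⁻¹ * ζ' ℓ)
    (ω : Quaternion ℝ) (hω : ω = ((1 + ζlast)⁻¹ * (1 - ζlast)).im)
    (qdil : Fin n → Quaternion ℝ) (hqdil : ∀ ℓ, qdil ℓ = ((lam : ℝ) : Quaternion ℝ) * q ℓ)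
    (ωdil : Quaternion ℝ) (hωdil : ωdil = ((lam ^ 2 : ℝ) : Quaternion ℝ) * ω)
    (B : Quaternion ℝ)
    (hB : B = (((1 + ∑ ℓ, ‖qdil ℓ‖ ^ 2 : ℝ)) : Quaternion ℝ) + ωdil)
    (D : Quaternion ℝ)
    (hD : D = 1 + ζlast + ((lam ^ 2 : ℝ) : Quaternion ℝ) * (1 - ζlast)) :
    (∀ ℓ, B⁻¹ * (2 * qdil ℓ) = D⁻¹ * (((2 * lam : ℝ) : Quaternion ℝ) * ζ' ℓ)) ∧
    B⁻¹ * ((((1 - ∑ ℓ, ‖qdil ℓ‖ ^ 2 : ℝ)) : Quaternion ℝ) - ωdil) =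
      D⁻¹ * (1 + ζlast - ((lam ^ 2 : ℝ) : Quaternion ℝ) * (1 - ζlast)) :=
  stmt11_general n lam ζ' ζlast hsphere hpole q hq ω hω qdil hqdil ωdil hωdil B hB D hD
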